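/- Let M be a matroid on ground set E and let N be a matroid whose ground set is the set of circuits of M. Assume that for every perfect collection 𝒞' of circuits of M, every circuit C of M with C ⊆ ∪𝒞' satisfies C ∈ cl_N(𝒞'). Then the function r : 2^E → ℤ defined, for all X ⊆ E, by r(X) = r_M(X) + r_N({C : C is a circuit of M with C ⊆ X}) is the rank function of a matroid L on E, and L is a rank-r_N(E(N)) lift of M. -/

import Mathlib

/-!
Write `C(X)` for the set of circuits of `M` contained in `X`, and for a set `R` of elements of
`N` put `liftRk X R = r_M(X) + r_N(C(X) ∪ R)`.

The hypothesis on perfect collections is used through one exchange property. If `e` lies in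
circuits `C` and `C₀`, choose a basis `B ⊇ C₀ - e` of `C ∪ C₀`; the fundamental circuits of the
elements of `(C ∪ C₀) \ B` form a perfect collection whose union contains `C`, and the one of `e`
is `C₀`. Hence `C` lies in the `N`-closure of `C₀` together with the circuits inside
`(C ∪ C₀) - e`. It follows that adding to `X` an element `e ∈ cl_M(X)` raises the `N`-part by at
most one (all new circuits are spanned by a single circuit `C₀ ∋ e`), and that the pairs
`(X', R') ⊇ (X, R)` with `liftRk X' R' = liftRk X R` are closed under unions.

These are rank axioms, so for a base `B₀` of `N` the function `Z ↦ liftRk (Z ∩ E) (Z ∩ B₀)` is the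
rank function of a matroid `K` on `E ⊔ B₀`. As `B₀` spans `N`, contracting `B₀` gives `M`, and
deleting it gives the matroid `L` with rank function `r_M(X) + r_N(C(X))`.
-/

open Set Matroid
open scoped Matroid

namespace PaperLift

variable {α : Type} {β : Type}

/-- A circuit of a matroid: a minimal dependent set. -/
def Circuit (M : Matroid α) (C : Set α) : Prop :=
  M.Dep C ∧ ∀ D, D ⊂ C → M.Indep D

/-- The rank of a set in a matroid: the supremum of cardinalities of independent subsets. -/
noncomputable def rk (M : Matroid α) (X : Set α) : ℕ :=
  sSup {n | ∃ I, M.Indep I ∧ I ⊆ X ∧ I.ncard = n}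

/-- The rank of a matroid. -/
noncomputable def rank (M : Matroid α) : ℕ := rk M M.E

/-- Deletion of a set from a matroid. -/
def delete (M : Matroid α) (D : Set α) : Matroid α := M ↾ (M.E \ D)

/-- Contraction of a set in a matroid, defined by duality. -/
noncomputable def contract (M : Matroid α) (C : Set α) : Matroid α := ((M✶) ↾ (M.E \ C))✶

/-- A hyperplane: a maximal proper flat. -/
def Hyperplane (M : Matroid α) (H : Set α) : Prop :=
  M.IsFlat H ∧ H ≠ M.E ∧ ∀ F, M.IsFlat F → H ⊂ F → F = M.E

/-- A circuit-hyperplane: a circuit that is also a hyperplane. -/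
def CircuitHyperplane (M : Matroid α) (C : Set α) : Prop :=
  Circuit M C ∧ Hyperplane M C

/-- `L` is a lift of `M`: there is a matroid `K` on a ground set `E ∪ F`, with `F` disjoint
from `E = M.E`, such that `M = K / F` and `L = K \ F` (up to the canonical embedding). -/
def IsLiftOf (L M : Matroid α) : Prop :=
  L.E = M.E ∧ ∃ (β : Type) (K : Matroid (α ⊕ β)) (F : Set (α ⊕ β)),
    Disjoint (Sum.inl '' M.E) F ∧ K.E = Sum.inl '' M.E ∪ F ∧
    contract K F = M.map Sum.inl Sum.inl_injective.injOn ∧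
    delete K F = L.map Sum.inl Sum.inl_injective.injOn

/-- `N`, a matroid whose ground set is the set of circuits of `M`, satisfies the lift
condition for `M`. -/
def LiftCondition (M : Matroid α) (N : Matroid (Set α)) : Prop :=
  N.E = {C | Circuit M C} ∧
  ∀ C₁ C₂, Circuit M C₁ → Circuit M C₂ →
    (C₁ ∪ C₂).ncard = rk M (C₁ ∪ C₂) + 2 →
    ∀ C, Circuit M C → C ⊆ C₁ ∪ C₂ → C ∈ N.closure {C₁, C₂}

/-- `L` has the rank function of the lift `M^N` of `M` constructed from `N`. -/
def IsLiftMatroid (M : Matroid α) (N : Matroid (Set α)) (L : Matroid α) : Prop :=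
  L.E = M.E ∧ ∀ X ⊆ M.E, rk L X = rk M X + rk N {C | Circuit M C ∧ C ⊆ X}

/-- Matroid isomorphism: a bijection between ground sets preserving independence
in both directions. -/
def Iso (M : Matroid α) (N : Matroid β) : Prop :=
  ∃ e : α → β, InjOn e M.E ∧ e '' M.E = N.E ∧ ∀ I ⊆ M.E, (M.Indep I ↔ N.Indep (e '' I))

/-- Representability of a matroid over a field `F`. -/
def Representable (M : Matroid α) (F : Type) [Field F] : Prop :=
  ∃ (W : Type) (_ : AddCommGroup W) (_ : Module F W) (φ : α → W),
    ∀ I ⊆ M.E, (M.Indep I ↔ InjOn φ I ∧ LinearIndependent F (fun e : I => φ e))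

/-- A rank-`r` matroid is sparse paving if every `r`-element subset of the ground set is
either a base or a circuit-hyperplane. -/
def SparsePaving (M : Matroid α) : Prop :=
  ∀ S ⊆ M.E, S.ncard = rank M → (M.IsBase S ∨ CircuitHyperplane M S)

/-- A perfect collection of circuits. -/
def Perfect (M : Matroid α) (Cs : Set (Set α)) : Prop :=
  Cs.Finite ∧ (∀ C ∈ Cs, Circuit M C) ∧
  (⋃₀ Cs).ncard = rk M (⋃₀ Cs) + Cs.ncard ∧
  ∀ C ∈ Cs, ¬ C ⊆ ⋃₀ (Cs \ {C})

/-- A linear class of circuits. -/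
def LinearClass (M : Matroid α) (𝒞 : Set (Set α)) : Prop :=
  (∀ C ∈ 𝒞, Circuit M C) ∧
  ∀ C₁ ∈ 𝒞, ∀ C₂ ∈ 𝒞, (C₁ ∪ C₂).ncard = rk M (C₁ ∪ C₂) + 2 →
    ∀ C, Circuit M C → C ⊆ C₁ ∪ C₂ → C ∈ 𝒞

/-- The circulant sets `C_i ⊆ [2t]` from the construction of `K(r,t)`. -/
def Ci (r t i : ℕ) : Set ℕ :=
  (fun k => (k + 2 * (i - 1) - 1) % (2 * t) + 1) '' (Set.Icc 1 (r - 2))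

/-- The family `𝒞'(r,t)`. -/
def CC' (r t : ℕ) : Set (Set ℕ) :=
  (fun i => Ci r t i ∪ {2 * t + 1, 2 * t + 2}) '' (Set.Icc 1 t)

/-- The family `𝒞''(r,t)`. -/
def CC'' (r t : ℕ) : Set (Set ℕ) :=
  (fun i => Ci r t i ∪ Ci r t (i + 1)) '' (Set.Icc 1 (t - 1))

/-- `K` is the matroid `K(r,t)`: a rank-`r` matroid on `[2t+2]` in which every `r`-element
subset is a base or a circuit-hyperplane, whose circuit-hyperplanes are exactly the members
of `𝒞'(r,t) ∪ 𝒞''(r,t)`. -/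
def IsKrt (r t : ℕ) (K : Matroid ℕ) : Prop :=
  K.E = Set.Icc 1 (2 * t + 2) ∧ rank K = r ∧
  (∀ S ⊆ K.E, S.ncard = r → (K.IsBase S ∨ CircuitHyperplane K S)) ∧
  (∀ S, CircuitHyperplane K S ↔ S ∈ CC' r t ∪ CC'' r t)

/-- A group partition: a partition of the non-identity elements such that each part
together with the identity is a subgroup. -/
def GroupPartition (Γ : Type) [Group Γ] (𝒜 : Set (Set Γ)) : Prop :=
  (∀ A ∈ 𝒜, A.Nonempty) ∧ (⋃₀ 𝒜 = {(1 : Γ)}ᶜ) ∧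
  (∀ A ∈ 𝒜, ∀ B ∈ 𝒜, A ≠ B → Disjoint A B) ∧
  (∀ A ∈ 𝒜, ∃ H : Subgroup Γ, (H : Set Γ) = insert 1 A)

section Rank

variable {M : Matroid α} {I X Y : Set α}

lemma rk_eq_toNat_eRk [M.RankFinite] (X : Set α) : rk M X = (M.eRk X).toNat := by
  obtain ⟨I, hI⟩ := M.exists_isBasis' X
  refine IsGreatest.csSup_eq ⟨⟨I, hI.indep, hI.subset, by rw [ncard_def, hI.encard_eq_eRk]⟩, ?_⟩
  rintro _ ⟨J, hJ, hJX, rfl⟩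
  exact ENat.toNat_le_toNat (hJ.encard_le_eRk_of_subset hJX) (M.isRkFinite_set X).eRk_lt_top.ne

lemma rk_eq_ncard_of_isBasis' [M.RankFinite] (hI : M.IsBasis' I X) : rk M X = I.ncard := by
  rw [rk_eq_toNat_eRk, ← hI.encard_eq_eRk, ncard_def]

lemma cast_rk [M.RankFinite] (X : Set α) : (rk M X : ℕ∞) = M.eRk X := by
  rw [rk_eq_toNat_eRk, ENat.natCast_toNat (M.isRkFinite_set X).eRk_lt_top.ne]

variable [M.RankFinite]

lemma rk_mono (hXY : X ⊆ Y) : rk M X ≤ rk M Y := by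
  have := M.eRk_mono hXY
  rwa [← cast_rk, ← cast_rk, Nat.cast_le] at this

lemma rk_empty : rk M ∅ = 0 := by
  have := M.eRk_empty
  rwa [← cast_rk, Nat.cast_eq_zero] at this

lemma rk_insert_le (e : α) (X : Set α) : rk M (insert e X) ≤ rk M X + 1 := by
  have := M.eRk_insert_le_add_one e X
  rwa [← cast_rk, ← cast_rk, ← Nat.cast_one, ← Nat.cast_add, Nat.cast_le] at this

lemma rk_le_of_subset_closure (h : X ⊆ M.closure Y) : rk M X ≤ rk M Y := by
  have := (M.eRk_mono h).trans_eq (M.eRk_closure_eq Y)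
  rwa [← cast_rk, ← cast_rk, Nat.cast_le] at this

lemma subset_closure_of_rk_le (hXY : X ⊆ Y) (hY : Y ⊆ M.E) (h : rk M Y ≤ rk M X) :
    Y ⊆ M.closure X := by
  rw [← Nat.cast_le (α := ℕ∞), cast_rk, cast_rk] at h
  rw [(M.isRkFinite_set X).closure_eq_closure_of_subset_of_eRk_ge_eRk hXY h]
  exact M.subset_closure Y hY

lemma indep_iff_rk_eq_ncard (hI : I.Finite) : M.Indep I ↔ rk M I = I.ncard := by
  rw [indep_iff_eRk_eq_encard_of_finite hI, ← cast_rk, ← hI.cast_ncard_eq, Nat.cast_inj]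

lemma rk_le_rk_of_isBase {B : Set α} (hB : M.IsBase B) (X : Set α) : rk M X ≤ rk M B := by
  have := (M.eRk_le_eRank X).trans_eq hB.eRk_eq_eRank.symm
  rwa [← cast_rk, ← cast_rk, Nat.cast_le] at this

end Rank

lemma rk_comap {N : Matroid β} [N.RankFinite] (f : α → β) (X : Set α) :
    rk (N.comap f) X = rk N (f '' X) := by
  rw [rk_eq_toNat_eRk, rk_eq_toNat_eRk, eRk_comap]

lemma rk_delete {M : Matroid α} [M.RankFinite] {X D : Set α} (hXD : Disjoint X D) :
    rk (M ＼ D) X = rk M X := by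
  rw [rk_eq_toNat_eRk, rk_eq_toNat_eRk, delete_eq_restrict, restrict_eRk_eq',
    ← inter_sdiff_assoc, (hXD.mono_left inter_subset_left).sdiff_eq_left, eRk_inter_ground]

structure RankAxioms (E : Set α) (r : Set α → ℕ) : Prop where
  empty : r ∅ = 0
  mono ⦃X Y : Set α⦄ : X ⊆ Y → Y ⊆ E → r X ≤ r Y
  insert_le ⦃X : Set α⦄ ⦃e : α⦄ : X ⊆ E → e ∈ E → r (insert e X) ≤ r X + 1
  union_eq ⦃X Y₁ Y₂ : Set α⦄ : X ⊆ Y₁ → X ⊆ Y₂ → Y₁ ⊆ E → Y₂ ⊆ E →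
    r Y₁ = r X → r Y₂ = r X → r (Y₁ ∪ Y₂) = r X

namespace RankAxioms

variable {E : Set α} {r : Set α → ℕ} {I X S : Set α}

lemma le_add_ncard (hr : RankAxioms E r) (hX : X ⊆ E) (hS : S ⊆ E) (hSfin : S.Finite) :
    r (X ∪ S) ≤ r X + S.ncard := by
  induction S, hSfin using Set.Finite.induction_on with
  | empty => simp
  | @insert e S heS hSfin ih =>
    rw [union_insert, ncard_insert_of_notMem heS hSfin]
    obtain ⟨heE, hSE⟩ := insert_subset_iff.1 hS
    have := hr.insert_le (union_subset hX hSE) heE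
    have := ih hSE
    omega

lemma le_ncard (hr : RankAxioms E r) (hI : I ⊆ E) (hIfin : I.Finite) : r I ≤ I.ncard := by
  simpa [hr.empty] using hr.le_add_ncard (empty_subset E) hI hIfin

lemma union_eq_of_forall_insert (hr : RankAxioms E r) (hX : X ⊆ E) (hS : S ⊆ E)
    (hSfin : S.Finite) (h : ∀ e ∈ S, r (insert e X) = r X) : r (X ∪ S) = r X := by
  induction S, hSfin using Set.Finite.induction_on generalizing X with
  | empty => simp
  | @insert e S _ _ ih =>
    obtain ⟨heE, hSE⟩ := insert_subset_iff.1 hS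
    rw [show X ∪ insert e S = insert e X ∪ (X ∪ S) by
      rw [insert_union, ← union_assoc, union_self, union_insert]]
    exact hr.union_eq (subset_insert e X) subset_union_left (insert_subset heE hX)
      (union_subset hX hSE) (h e (mem_insert e S))
      (ih hX hSE fun f hf ↦ h f (mem_insert_of_mem e hf))

lemma insert_eq_of_not_le (hr : RankAxioms E r) (hE : E.Finite) (hI : I ⊆ E)
    (hIr : I.ncard ≤ r I) (he : e ∈ E \ I) (hn : ¬ (insert e I).ncard ≤ r (insert e I)) :
    r (insert e I) = r I := by
  rw [ncard_insert_of_notMem he.2 (hE.subset hI)] at hn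
  have := hr.le_ncard hI (hE.subset hI)
  have := hr.mono (subset_insert e I) (insert_subset he.1 hI)
  omega

lemma exists_matroid (hr : RankAxioms E r) (hE : E.Finite) :
    ∃ M : Matroid α, M.E = E ∧ ∀ X ⊆ E, rk M X = r X := by
  refine ⟨(IndepMatroid.ofFinite hE (fun I ↦ I ⊆ E ∧ I.ncard ≤ r I) ?_ ?_ ?_
    fun I hI ↦ hI.1).matroid, rfl, fun X hX ↦ ?_⟩
  · simp [hr.empty]
  · rintro I J ⟨hJE, hJr⟩ hIJ
    have hJI : J \ I ⊆ E := sdiff_subset.trans hJE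
    have hr' := hr.le_add_ncard (hIJ.trans hJE) hJI (hE.subset hJI)
    rw [union_sdiff_cancel hIJ] at hr'
    have := ncard_sdiff_add_ncard_of_subset hIJ (hE.subset hJE)
    exact ⟨hIJ.trans hJE, by omega⟩
  · rintro I J ⟨hIE, hIr⟩ ⟨hJE, hJr⟩ hlt
    by_contra! hcon
    have hJI : J \ I ⊆ E := sdiff_subset.trans hJE
    have hIJ := hr.union_eq_of_forall_insert hIE hJI (hE.subset hJI)
      fun e he ↦ hr.insert_eq_of_not_le hE hIE hIr ⟨hJE he.1, he.2⟩
        (hcon e he.1 he.2 (insert_subset (hJE he.1) hIE)).not_ge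
    rw [union_sdiff_self] at hIJ
    have := hr.mono subset_union_right (union_subset hIE hJE)
    have := hr.le_ncard hIE (hE.subset hIE)
    omega
  · set M := (IndepMatroid.ofFinite hE (fun I ↦ I ⊆ E ∧ I.ncard ≤ r I) _ _ _ _).matroid
    have : M.Finite := ⟨hE⟩
    obtain ⟨I, hI⟩ := M.exists_isBasis' X
    obtain ⟨hIE, hIr⟩ : I ⊆ E ∧ I.ncard ≤ r I := hI.indep
    have hXIE : X \ I ⊆ E := sdiff_subset.trans hX
    have hXI := hr.union_eq_of_forall_insert hIE hXIE (hE.subset hXIE)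
      fun e he ↦ hr.insert_eq_of_not_le hE hIE hIr ⟨hX he.1, he.2⟩
        fun hle ↦ hI.insert_not_indep he ⟨insert_subset (hX he.1) hIE, hle⟩
    rw [union_sdiff_cancel hI.subset] at hXI
    have := hr.le_ncard hIE (hE.subset hIE)
    rw [rk_eq_ncard_of_isBasis' hI]
    omega

end RankAxioms

section Circuits

variable {M : Matroid α} {B C X Y S : Set α} {e y : α}

lemma circuit_iff_isCircuit : Circuit M C ↔ M.IsCircuit C :=
  isCircuit_iff_forall_ssubset.symm

def circuitsIn (M : Matroid α) (X : Set α) : Set (Set α) := {C | Circuit M C ∧ C ⊆ X}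

lemma circuitsIn_mono (hXY : X ⊆ Y) : circuitsIn M X ⊆ circuitsIn M Y :=
  fun _ hC ↦ ⟨hC.1, hC.2.trans hXY⟩

lemma circuitsIn_empty : circuitsIn M ∅ = ∅ :=
  eq_empty_of_forall_notMem fun _ ⟨hC, hC0⟩ ↦
    (circuit_iff_isCircuit.1 hC).nonempty.ne_empty (subset_empty_iff.1 hC0)

lemma circuitsIn_insert_of_notMem_closure (he : e ∉ M.closure X) :
    circuitsIn M (insert e X) = circuitsIn M X := by
  refine (circuitsIn_mono (subset_insert e X)).antisymm' fun C ⟨hC, hCX⟩ ↦ ⟨hC, fun x hx ↦ ?_⟩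
  refine (hCX hx).resolve_left ?_
  rintro rfl
  refine he (M.closure_subset_closure (fun y hy ↦ ?_)
    ((circuit_iff_isCircuit.1 hC).mem_closure_sdiff_singleton_of_mem hx))
  exact (hCX hy.1).resolve_left hy.2

lemma eq_of_mem_fundCircuit (hy : y ∈ M.fundCircuit e B) (hyB : y ∉ B) : y = e :=
  (M.fundCircuit_subset_insert e B hy).resolve_right hyB

lemma sUnion_image_fundCircuit_sdiff (hSB : Disjoint S B) :
    ⋃₀ ((M.fundCircuit · B) '' S) \ B = S := by
  refine subset_antisymm ?_ fun y hy ↦ ⟨⟨_, mem_image_of_mem _ hy, M.mem_fundCircuit y B⟩,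
    hSB.notMem_of_mem_left hy⟩
  rintro z ⟨⟨_, ⟨y, hy, rfl⟩, hz⟩, hzB⟩
  rwa [eq_of_mem_fundCircuit hz hzB]

lemma sUnion_image_fundCircuit_subset_closure (hB : M.Indep B) (hS : S ⊆ M.closure B \ B) :
    ⋃₀ ((M.fundCircuit · B) '' S) ⊆ M.closure (⋃₀ ((M.fundCircuit · B) '' S) ∩ B) := by
  rintro z ⟨_, ⟨y, hy, rfl⟩, hz⟩
  by_cases hzB : z ∈ B
  · exact M.subset_closure _ (inter_subset_right.trans hB.subset_ground)
      ⟨⟨_, mem_image_of_mem _ hy, hz⟩, hzB⟩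
  obtain rfl := eq_of_mem_fundCircuit hz hzB
  have hsub : M.fundCircuit z B \ {z} ⊆ ⋃₀ ((M.fundCircuit · B) '' S) ∩ B :=
    fun x hx ↦ ⟨⟨_, mem_image_of_mem _ hy, hx.1⟩,
      (M.fundCircuit_subset_insert z B hx.1).resolve_left hx.2⟩
  exact M.closure_subset_closure hsub
    ((hB.fundCircuit_isCircuit (hS hy).1 (hS hy).2).mem_closure_sdiff_singleton_of_mem hz)

/-- The union `U` satisfies `U \ B = S` and is spanned by the independent set `U ∩ B`, so its
nullity is `|S|`, the number of circuits. -/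
lemma perfect_image_fundCircuit [M.Finite] (hB : M.Indep B) (hS : S ⊆ M.closure B \ B) :
    Perfect M ((M.fundCircuit · B) '' S) := by
  have hSfin : S.Finite := M.ground_finite.subset (hS.trans (sdiff_subset.trans
    (M.closure_subset_ground B)))
  have hSB : Disjoint S B := disjoint_left.2 fun y hy ↦ (hS hy).2
  have hinj : InjOn (M.fundCircuit · B) S := fun y hy y' _ hyy' ↦
    eq_of_mem_fundCircuit (hyy'.subset (M.mem_fundCircuit y B)) (hSB.notMem_of_mem_left hy)
  set U := ⋃₀ ((M.fundCircuit · B) '' S)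
  have hUfin : U.Finite := M.ground_finite.subset (sUnion_subset (by
    rintro _ ⟨y, hy, rfl⟩
    exact (hB.fundCircuit_isCircuit (hS hy).1 (hS hy).2).subset_ground))
  have hrkU : rk M U = (U ∩ B).ncard := by
    rw [← (indep_iff_rk_eq_ncard (hUfin.inter_of_left B)).1 (hB.subset inter_subset_right)]
    exact le_antisymm (rk_le_of_subset_closure (sUnion_image_fundCircuit_subset_closure hB hS))
      (rk_mono inter_subset_left)
  refine ⟨hSfin.image _, ?_, ?_, ?_⟩
  · rintro _ ⟨y, hy, rfl⟩
    exact circuit_iff_isCircuit.2 (hB.fundCircuit_isCircuit (hS hy).1 (hS hy).2)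
  · have hUB : U \ B = S := sUnion_image_fundCircuit_sdiff hSB
    rw [hinj.ncard_image]
    show U.ncard = rk M U + S.ncard
    rw [hrkU, ← hUB, ncard_inter_add_ncard_sdiff_eq_ncard U B hUfin]
  · rintro _ ⟨y, hy, rfl⟩ hsub
    obtain ⟨_, ⟨⟨y', hy', rfl⟩, hne⟩, hyy'⟩ := hsub (M.mem_fundCircuit y B)
    exact hne (congrArg (M.fundCircuit · B)
      (eq_of_mem_fundCircuit hyy' (hSB.notMem_of_mem_left hy)).symm)

lemma subset_sUnion_image_fundCircuit (hB : M.IsBasis B Y) (hC : M.IsCircuit C) (hCY : C ⊆ Y) :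
    C ⊆ ⋃₀ ((M.fundCircuit · B) '' (Y \ B)) := by
  intro c hc
  by_contra hcU
  have hcB : c ∈ B := by
    by_contra hcB
    exact hcU ⟨_, mem_image_of_mem _ ⟨hCY hc, hcB⟩, M.mem_fundCircuit c B⟩
  have hY : Y \ {c} ⊆ M.closure (B \ {c}) := by
    rintro y ⟨hyY, hyc⟩
    by_cases hyB : y ∈ B
    · exact M.subset_closure _ (sdiff_subset.trans hB.indep.subset_ground) ⟨hyB, hyc⟩
    have hD := hB.indep.fundCircuit_isCircuit (hB.subset_closure hyY) hyB
    have hDc : M.fundCircuit y B \ {y} ⊆ B \ {c} := fun x hx ↦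
      ⟨(M.fundCircuit_subset_insert y B hx.1).resolve_left hx.2,
        by rintro rfl; exact hcU ⟨_, mem_image_of_mem _ ⟨hyY, hyB⟩, hx.1⟩⟩
    exact M.closure_subset_closure hDc
      (hD.mem_closure_sdiff_singleton_of_mem (M.mem_fundCircuit y B))
  exact hB.indep.notMem_closure_sdiff_of_mem hcB (M.closure_subset_closure_of_subset_closure
    ((sdiff_subset_sdiff_left hCY).trans hY) (hC.mem_closure_sdiff_singleton_of_mem hc))

end Circuits

def PerfectSpanning (M : Matroid α) (N : Matroid (Set α)) : Prop :=
  ∀ Cs, Perfect M Cs → ∀ C, Circuit M C → C ⊆ ⋃₀ Cs → C ∈ N.closure Cs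

namespace PerfectSpanning

variable {M : Matroid α} {N : Matroid (Set α)} {C C₀ Y : Set α} {e : α}

lemma mem_closure_insert [M.Finite] (h : PerfectSpanning M N) (hC : M.IsCircuit C)
    (hC₀ : M.IsCircuit C₀) (heC : e ∈ C) (heC₀ : e ∈ C₀) :
    C ∈ N.closure (insert C₀ (circuitsIn M ((C ∪ C₀) \ {e}))) := by
  obtain ⟨B, hB, hC₀B⟩ := (hC₀.sdiff_singleton_indep heC₀).subset_isBasis_of_subset
    (sdiff_subset.trans subset_union_right) (union_subset hC.subset_ground hC₀.subset_ground)
  have hC₀eB : C₀ ⊆ insert e B := sdiff_singleton_subset_iff.1 hC₀B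
  have heB : e ∉ B := fun heB ↦
    hC₀.not_indep (hB.indep.subset (hC₀eB.trans (insert_subset heB subset_rfl)))
  have hCs := h _ (perfect_image_fundCircuit hB.indep fun y hy ↦ ⟨hB.subset_closure hy.1, hy.2⟩)
    C (circuit_iff_isCircuit.2 hC) (subset_sUnion_image_fundCircuit hB hC subset_union_left)
  refine N.closure_subset_closure ?_ hCs
  rintro _ ⟨y, hy, rfl⟩
  dsimp only
  obtain rfl | hye := eq_or_ne y e
  · rw [← hC₀.eq_fundCircuit_of_subset hB.indep hC₀eB]
    exact mem_insert _ _
  refine mem_insert_of_mem _ ⟨circuit_iff_isCircuit.2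
    (hB.indep.fundCircuit_isCircuit (hB.subset_closure hy.1) hy.2), fun x hx ↦ ⟨?_, ?_⟩⟩
  · exact insert_subset hy.1 hB.subset (M.fundCircuit_subset_insert y B hx)
  · rintro rfl
    exact hye (eq_of_mem_fundCircuit hx heB).symm

lemma circuitsIn_insert_subset_closure [M.Finite] (h : PerfectSpanning M N)
    {A : Set (Set α)} (hC₀ : M.IsCircuit C₀) (heC₀ : e ∈ C₀) (hC₀Y : C₀ ⊆ insert e Y)
    (hC₀A : C₀ ∈ N.closure A) (hYA : circuitsIn M Y ⊆ N.closure A) :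
    circuitsIn M (insert e Y) ⊆ N.closure A := by
  rintro C ⟨hC, hCY⟩
  by_cases heC : e ∈ C
  · refine N.closure_subset_closure_of_subset_closure
      (insert_subset hC₀A fun D hD ↦ hYA ⟨hD.1, ?_⟩)
      (h.mem_closure_insert (circuit_iff_isCircuit.1 hC) hC₀ heC heC₀)
    exact hD.2.trans (sdiff_singleton_subset_iff.2 (union_subset hCY hC₀Y))
  · exact hYA ⟨hC, (subset_insert_iff_of_notMem heC).1 hCY⟩

lemma circuitsIn_union_subset_closure [M.Finite] (h : PerfectSpanning M N) {X X₁ X₂ : Set α}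
    {A : Set (Set α)} (hX₁cl : X₁ ⊆ M.closure X) (hX₁ : X ⊆ X₁) (hX₂ : X ⊆ X₂)
    (h₁ : circuitsIn M X₁ ⊆ N.closure A) (h₂ : circuitsIn M X₂ ⊆ N.closure A) :
    circuitsIn M (X₁ ∪ X₂) ⊆ N.closure A := by
  have hfin : (X₁ \ X).Finite :=
    M.ground_finite.subset (sdiff_subset.trans (hX₁cl.trans (M.closure_subset_ground X)))
  have hS : ∀ S ⊆ X₁ \ X, circuitsIn M (X₂ ∪ S) ⊆ N.closure A := by
    intro S hS
    induction S, hfin.subset hS using Set.Finite.induction_on with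
    | empty => rwa [union_empty]
    | @insert e S _ _ ih =>
      obtain ⟨he, hSX⟩ := insert_subset_iff.1 hS
      obtain ⟨C₀, hC₀X, hC₀, heC₀⟩ := exists_isCircuit_of_mem_closure (hX₁cl he.1) he.2
      rw [union_insert]
      exact h.circuitsIn_insert_subset_closure hC₀ heC₀
        (hC₀X.trans (insert_subset_insert (hX₂.trans subset_union_left)))
        (h₁ ⟨circuit_iff_isCircuit.2 hC₀, hC₀X.trans (insert_subset he.1 hX₁)⟩) (ih hSX)
  refine (circuitsIn_mono fun x hx ↦ ?_).trans (hS _ subset_rfl)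
  by_cases hxX : x ∈ X
  · exact Or.inl (hX₂ hxX)
  · exact hx.elim (fun hx₁ ↦ Or.inr ⟨hx₁, hxX⟩) Or.inl

end PerfectSpanning

/-- `R` collects elements of `N` adjoined to the ground set of `M`; `R = ∅` gives the rank
function of the lift. -/
noncomputable def liftRk (M : Matroid α) (N : Matroid (Set α)) (X : Set α) (R : Set (Set α)) : ℕ :=
  rk M X + rk N (circuitsIn M X ∪ R)

section LiftRk

variable {M : Matroid α} {N : Matroid (Set α)} {X X₁ X₂ : Set α} {R R₁ R₂ : Set (Set α)}
  [M.Finite] [N.RankFinite]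

lemma liftRk_mono (hX : X₁ ⊆ X₂) (hR : R₁ ⊆ R₂) : liftRk M N X₁ R₁ ≤ liftRk M N X₂ R₂ :=
  add_le_add (rk_mono hX) (rk_mono (union_subset_union (circuitsIn_mono hX) hR))

lemma liftRk_eq_iff (hNE : {C | Circuit M C} ⊆ N.E) (hX : X ⊆ X₁) (hX₁ : X₁ ⊆ M.E)
    (hR : R ⊆ R₁) (hR₁ : R₁ ⊆ N.E) :
    liftRk M N X₁ R₁ = liftRk M N X R ↔
      X₁ ⊆ M.closure X ∧ circuitsIn M X₁ ∪ R₁ ⊆ N.closure (circuitsIn M X ∪ R) := by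
  have hA : circuitsIn M X ∪ R ⊆ circuitsIn M X₁ ∪ R₁ :=
    union_subset_union (circuitsIn_mono hX) hR
  refine ⟨fun h ↦ ?_, fun ⟨hM, hN⟩ ↦ ?_⟩
  · have hMle := rk_mono (M := M) hX
    have hNle := rk_mono (M := N) hA
    unfold liftRk at h
    exact ⟨subset_closure_of_rk_le hX hX₁ (by omega),
      subset_closure_of_rk_le hA (union_subset (fun C hC ↦ hNE hC.1) hR₁) (by omega)⟩
  · exact le_antisymm (add_le_add (rk_le_of_subset_closure hM) (rk_le_of_subset_closure hN))
      (liftRk_mono hX hR)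

lemma liftRk_insert_le (h : PerfectSpanning M N) (hNE : {C | Circuit M C} ⊆ N.E)
    (hX : X ⊆ M.E) (hR : R ⊆ N.E) (e : α) :
    liftRk M N (insert e X) R ≤ liftRk M N X R + 1 := by
  unfold liftRk
  by_cases heX : e ∈ X
  · rw [insert_eq_of_mem heX]
    omega
  by_cases hecl : e ∈ M.closure X
  · obtain ⟨C₀, hC₀X, hC₀, heC₀⟩ := exists_isCircuit_of_mem_closure hecl heX
    set A := insert C₀ (circuitsIn M X ∪ R)
    have hA : A ⊆ N.E := insert_subset (hNE (circuit_iff_isCircuit.2 hC₀))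
      (union_subset (fun C hC ↦ hNE hC.1) hR)
    have hXA : circuitsIn M X ∪ R ⊆ N.closure A := (subset_insert _ _).trans (N.subset_closure A hA)
    have hMle : rk M (insert e X) ≤ rk M X :=
      rk_le_of_subset_closure (insert_subset hecl (M.subset_closure X hX))
    have hNle : rk N (circuitsIn M (insert e X) ∪ R) ≤ rk N A :=
      rk_le_of_subset_closure (union_subset (h.circuitsIn_insert_subset_closure hC₀ heC₀ hC₀X
        (N.subset_closure A hA (mem_insert C₀ _)) (subset_union_left.trans hXA))
        (subset_union_right.trans hXA))
    have : rk N A ≤ rk N (circuitsIn M X ∪ R) + 1 := rk_insert_le _ _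
    omega
  · rw [circuitsIn_insert_of_notMem_closure hecl]
    have := rk_insert_le (M := M) e X
    omega

lemma liftRk_union_eq (h : PerfectSpanning M N) (hNE : {C | Circuit M C} ⊆ N.E)
    (hX₁ : X ⊆ X₁) (hX₂ : X ⊆ X₂) (hX₁E : X₁ ⊆ M.E) (hX₂E : X₂ ⊆ M.E)
    (hR₁ : R ⊆ R₁) (hR₂ : R ⊆ R₂) (hR₁N : R₁ ⊆ N.E) (hR₂N : R₂ ⊆ N.E)
    (h₁ : liftRk M N X₁ R₁ = liftRk M N X R) (h₂ : liftRk M N X₂ R₂ = liftRk M N X R) :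
    liftRk M N (X₁ ∪ X₂) (R₁ ∪ R₂) = liftRk M N X R := by
  rw [liftRk_eq_iff hNE hX₁ hX₁E hR₁ hR₁N] at h₁
  rw [liftRk_eq_iff hNE hX₂ hX₂E hR₂ hR₂N] at h₂
  rw [liftRk_eq_iff hNE (hX₁.trans subset_union_left) (union_subset hX₁E hX₂E)
    (hR₁.trans subset_union_left) (union_subset hR₁N hR₂N)]
  refine ⟨union_subset h₁.1 h₂.1, union_subset ?_ (union_subset (subset_union_right.trans h₁.2)
    (subset_union_right.trans h₂.2))⟩
  exact h.circuitsIn_union_subset_closure h₁.1 hX₁ hX₂ (subset_union_left.trans h₁.2)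
    (subset_union_left.trans h₂.2)

end LiftRk

section SumPreimage

variable {Z : Set (α ⊕ β)}

lemma preimage_inl_insert_inl (a : α) :
    Sum.inl ⁻¹' insert (Sum.inl a) Z = insert a (Sum.inl ⁻¹' Z) := by
  ext; simp

lemma preimage_inr_insert_inl (a : α) : Sum.inr ⁻¹' insert (Sum.inl a) Z = Sum.inr ⁻¹' Z := by
  ext; simp

lemma preimage_inl_insert_inr (b : β) : Sum.inl ⁻¹' insert (Sum.inr b) Z = Sum.inl ⁻¹' Z := by
  ext; simp

lemma preimage_inr_insert_inr (b : β) :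
    Sum.inr ⁻¹' insert (Sum.inr b) Z = insert b (Sum.inr ⁻¹' Z) := by
  ext; simp

end SumPreimage

section Major

variable {M : Matroid α} {N : Matroid (Set α)} {B₀ : Set (Set α)}

lemma rankAxioms_liftRk_preimage [M.Finite] [N.RankFinite] (h : PerfectSpanning M N)
    (hNE : {C | Circuit M C} ⊆ N.E) (hB₀ : B₀ ⊆ N.E) :
    RankAxioms (Sum.inl '' M.E ∪ Sum.inr '' B₀)
      (fun Z ↦ liftRk M N (Sum.inl ⁻¹' Z) (Sum.inr ⁻¹' Z)) := by
  have hl {Z : Set (α ⊕ Set α)} (hZ : Z ⊆ Sum.inl '' M.E ∪ Sum.inr '' B₀) :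
      Sum.inl ⁻¹' Z ⊆ M.E := fun x hx ↦ by simpa using hZ hx
  have hr {Z : Set (α ⊕ Set α)} (hZ : Z ⊆ Sum.inl '' M.E ∪ Sum.inr '' B₀) :
      Sum.inr ⁻¹' Z ⊆ N.E := fun c hc ↦ hB₀ (by simpa using hZ hc)
  refine ⟨?_, fun Z W hZW _ ↦ liftRk_mono (preimage_mono hZW) (preimage_mono hZW), ?_, ?_⟩
  · simp [liftRk, circuitsIn_empty, rk_empty]
  · rintro Z (e | c) hZ -
    · rw [preimage_inl_insert_inl, preimage_inr_insert_inl]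
      exact liftRk_insert_le h hNE (hl hZ) (hr hZ) e
    · rw [preimage_inl_insert_inr, preimage_inr_insert_inr, liftRk, liftRk, union_insert]
      have := rk_insert_le (M := N) c (circuitsIn M (Sum.inl ⁻¹' Z) ∪ Sum.inr ⁻¹' Z)
      omega
  · intro Z Y₁ Y₂ hZ₁ hZ₂ hY₁ hY₂ h₁ h₂
    simpa only [preimage_union] using liftRk_union_eq h hNE (preimage_mono hZ₁)
      (preimage_mono hZ₂) (hl hY₁) (hl hY₂) (preimage_mono hZ₁) (preimage_mono hZ₂) (hr hY₁)
      (hr hY₂) h₁ h₂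

lemma exists_major [M.Finite] [N.Finite] (h : PerfectSpanning M N)
    (hNE : {C | Circuit M C} ⊆ N.E) (hB₀ : B₀ ⊆ N.E) :
    ∃ K : Matroid (α ⊕ Set α), K.E = Sum.inl '' M.E ∪ Sum.inr '' B₀ ∧
      ∀ X ⊆ M.E, ∀ R ⊆ B₀, rk K (Sum.inl '' X ∪ Sum.inr '' R) = liftRk M N X R := by
  obtain ⟨K, hKE, hK⟩ := (rankAxioms_liftRk_preimage h hNE hB₀).exists_matroid
    ((M.ground_finite.image _).union ((N.ground_finite.subset hB₀).image _))
  refine ⟨K, hKE, fun X hX R hR ↦ ?_⟩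
  rw [hK _ (union_subset_union (image_mono hX) (image_mono hR))]
  simp [preimage_union, Sum.inl_injective.preimage_image, Sum.inr_injective.preimage_image]

lemma comap_inl_contract_eq [M.Finite] [N.Finite] {K : Matroid (α ⊕ Set α)} [K.Finite]
    (hB₀ : N.IsBase B₀)
    (hKE : K.E = Sum.inl '' M.E ∪ Sum.inr '' B₀)
    (hK : ∀ X ⊆ M.E, ∀ R ⊆ B₀, rk K (Sum.inl '' X ∪ Sum.inr '' R) = liftRk M N X R) :
    (K ／ Sum.inr '' B₀).comap Sum.inl = M := by
  have hB₀fin : B₀.Finite := N.ground_finite.subset hB₀.subset_ground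
  have hK' : ∀ X ⊆ M.E, rk K (Sum.inl '' X ∪ Sum.inr '' B₀) = rk M X + B₀.ncard := by
    intro X hX
    rw [hK X hX B₀ subset_rfl, liftRk, ← (indep_iff_rk_eq_ncard hB₀fin).1 hB₀.indep]
    exact congrArg _ ((rk_le_rk_of_isBase hB₀ _).antisymm (rk_mono subset_union_right))
  have hF : K.Indep (Sum.inr '' B₀) := by
    have := hK' ∅ (empty_subset _)
    rw [image_empty, empty_union, rk_empty, zero_add] at this
    rw [indep_iff_rk_eq_ncard (hB₀fin.image _), this,
      ncard_image_of_injective _ Sum.inr_injective]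
  refine ext_indep (by ext x; simp [hKE]) fun I hI ↦ ?_
  have hIE : I ⊆ M.E := fun x hx ↦ by simpa [hKE] using hI hx
  have hIfin : I.Finite := M.ground_finite.subset hIE
  rw [comap_indep_iff, hF.contract_indep_iff, indep_iff_rk_eq_ncard
    ((hIfin.image _).union (hB₀fin.image _)), hK' I hIE, ncard_union_eq
    disjoint_image_inl_image_inr (hIfin.image _) (hB₀fin.image _),
    ncard_image_of_injective _ Sum.inl_injective, ncard_image_of_injective _ Sum.inr_injective,
    indep_iff_rk_eq_ncard hIfin]
  simp [disjoint_image_inl_image_inr, Sum.inl_injective.injOn]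

end Major

lemma isLiftOf_comap_delete {M : Matroid α} {K : Matroid (α ⊕ β)} {F : Set β}
    (hKE : K.E = Sum.inl '' M.E ∪ Sum.inr '' F)
    (hM : (K ／ Sum.inr '' F).comap Sum.inl = M) :
    IsLiftOf ((K ＼ Sum.inr '' F).comap Sum.inl) M := by
  have hG : K.E \ Sum.inr '' F = Sum.inl '' M.E := by
    rw [hKE, union_sdiff_right, disjoint_image_inl_image_inr.sdiff_eq_left]
  have hrange : K.E \ Sum.inr '' F ⊆ range Sum.inl := hG ▸ image_subset_range _ _
  refine ⟨by simp [hG, Sum.inl_injective.preimage_image], β, K, Sum.inr '' F,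
    disjoint_image_inl_image_inr, hKE, ?_, (map_comap hrange Sum.inl_injective.injOn).symm⟩
  subst hM
  exact (map_comap hrange Sum.inl_injective.injOn).symm

/-- The original lift construction: if `N`, a matroid on the circuits of `M`, satisfies the
perfect-collection condition, then `X ↦ r_M(X) + r_N({circuits of M contained in X})` is
the rank function of a matroid `L` on `E`, and `L` is a rank-`r(N)` lift of `M`. -/
theorem stmt6 {α : Type} (M : Matroid α) (hM : M.E.Finite) (N : Matroid (Set α))
    (hNE : N.E = {C | Circuit M C})
    (h : ∀ Cs, Perfect M Cs → ∀ C, Circuit M C → C ⊆ ⋃₀ Cs → C ∈ N.closure Cs) :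
    ∃ L : Matroid α, L.E = M.E ∧
      (∀ X ⊆ M.E, rk L X = rk M X + rk N {C | Circuit M C ∧ C ⊆ X}) ∧
      IsLiftOf L M ∧ rank L = rank M + rank N := by
  have : M.Finite := ⟨hM⟩
  have : N.Finite := ⟨hM.finite_subsets.subset (hNE ▸ fun C hC ↦ hC.1.subset_ground)⟩
  obtain ⟨B₀, hB₀⟩ := N.exists_isBase
  obtain ⟨K, hKE, hK⟩ := exists_major h hNE.symm.subset hB₀.subset_ground
  have : K.Finite := ⟨hKE ▸ (hM.image _).union ((N.ground_finite.subset hB₀.subset_ground).image _)⟩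
  have hLift := isLiftOf_comap_delete hKE (comap_inl_contract_eq hB₀ hKE hK)
  set L := (K ＼ Sum.inr '' B₀).comap Sum.inl
  have hLrk : ∀ X ⊆ M.E, rk L X = rk M X + rk N (circuitsIn M X) := by
    intro X hX
    rw [rk_comap, rk_delete (disjoint_image_inl_image_inr), ← union_empty (Sum.inl '' X),
      ← image_empty Sum.inr, hK X hX ∅ (empty_subset _), liftRk, union_empty]
  have hcircuits : circuitsIn M M.E = N.E := by
    rw [hNE]
    exact Set.ext fun C ↦ and_iff_left_of_imp fun hC ↦ hC.1.subset_ground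
  refine ⟨L, hLift.1, hLrk, hLift, ?_⟩
  rw [rank, hLift.1, hLrk M.E subset_rfl, hcircuits]
  rfl

end PaperLift
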